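/- Let H² denote the Hardy space realized as ℓ²(ℕ, ℂ) and let M_z be the unilateral shift S : ℓ²(ℕ) → ℓ²(ℕ), (S a)(n+1) = a(n), (S a)(0) = 0. Then there exists a norm-one linear idempotent P : B(ℓ²(ℕ)) → B(ℓ²(ℕ)) whose range is exactly the set 𝒯 = {C ∈ B(ℓ²(ℕ)) : S* C S = C} of Toeplitz operators. -/

import Mathlib

/-!
Let `L` be a Banach limit, realised as the limit of Cesàro means along a free ultrafilter, and
let `P C` be the operator of the bounded sesquilinear form `(ξ, η) ↦ L (n ↦ ⟪C Sⁿ ξ, Sⁿ η⟫)`.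
Since `S` is a contraction, `‖P C‖ ≤ ‖C‖`. Shift invariance of `L` gives `S⋆ (P C) S = P C`,
and for a Toeplitz operator `C` the sequence is constant, so `P C = C`. Hence `P` is an
idempotent onto the Toeplitz operators, and `P 1 = 1` because `S` is an isometry, so `‖P‖ = 1`.
-/

open Filter Topology ContinuousLinearMap InnerProductSpace
open scoped InnerProductSpace

noncomputable section

section BanachLimit

variable {𝕜 : Type*} [RCLike 𝕜] {a b : ℕ → 𝕜} {M N : ℝ}

def cesaroMean (a : ℕ → 𝕜) (n : ℕ) : 𝕜 := (n : 𝕜)⁻¹ * ∑ k ∈ Finset.range n, a k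

/-- Limit of the Cesàro means along a free ultrafilter: on bounded sequences this is a
Banach limit (linear, bounded by the supremum, shift invariant, `1` on constants); on
unbounded sequences its value is junk. -/
def banachLim (a : ℕ → 𝕜) : 𝕜 := limUnder (hyperfilter ℕ) (cesaroMean a)

lemma norm_cesaroMean_le (h : ∀ n, ‖a n‖ ≤ M) (n : ℕ) : ‖cesaroMean a n‖ ≤ M := by
  rcases n.eq_zero_or_pos with rfl | hn
  · simpa [cesaroMean] using (norm_nonneg _).trans (h 0)
  · have hsum : ‖∑ k ∈ Finset.range n, a k‖ ≤ n * M := by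
      simpa using norm_sum_le_of_le (Finset.range n) fun k _ => h k
    rw [cesaroMean, norm_mul, norm_inv, RCLike.norm_natCast, inv_mul_le_iff₀ (by positivity)]
    exact hsum

lemma tendsto_cesaroMean_banachLim (h : ∀ n, ‖a n‖ ≤ M) :
    Tendsto (cesaroMean a) (hyperfilter ℕ) (𝓝 (banachLim a)) := by
  have hle : ((hyperfilter ℕ).map (cesaroMean a) : Filter 𝕜) ≤ 𝓟 (Metric.closedBall 0 M) := by
    rw [Ultrafilter.coe_map, le_principal_iff, mem_map]
    exact Eventually.of_forall fun n => mem_closedBall_zero_iff.mpr (norm_cesaroMean_le h n)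
  obtain ⟨c, -, hc⟩ := (isCompact_closedBall (0 : 𝕜) M).ultrafilter_le_nhds _ hle
  exact tendsto_nhds_limUnder ⟨c, hc⟩

lemma norm_banachLim_le (h : ∀ n, ‖a n‖ ≤ M) : ‖banachLim a‖ ≤ M :=
  le_of_tendsto (tendsto_cesaroMean_banachLim h).norm (Eventually.of_forall (norm_cesaroMean_le h))

lemma banachLim_add (ha : ∀ n, ‖a n‖ ≤ M) (hb : ∀ n, ‖b n‖ ≤ N) :
    banachLim (a + b) = banachLim a + banachLim b := by
  have hmean : cesaroMean (a + b) = cesaroMean a + cesaroMean b := by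
    funext n; simp [cesaroMean, Finset.sum_add_distrib, mul_add]
  rw [banachLim, hmean]
  exact ((tendsto_cesaroMean_banachLim ha).add (tendsto_cesaroMean_banachLim hb)).limUnder_eq

lemma banachLim_const_mul (c : 𝕜) (ha : ∀ n, ‖a n‖ ≤ M) :
    banachLim (fun n => c * a n) = c * banachLim a := by
  have hmean : cesaroMean (fun n => c * a n) = fun n => c * cesaroMean a n := by
    funext n; simp [cesaroMean, ← Finset.mul_sum, mul_left_comm]
  rw [banachLim, hmean]
  exact ((tendsto_cesaroMean_banachLim ha).const_mul c).limUnder_eq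

lemma banachLim_const (c : 𝕜) : banachLim (fun _ => c) = c := by
  have hmean : cesaroMean (fun _ => c) =ᶠ[atTop] fun _ => c := by
    filter_upwards [eventually_ne_atTop 0] with n hn
    simp [cesaroMean, hn]
  exact ((tendsto_const_nhds.congr' hmean.symm).mono_left Nat.hyperfilter_le_atTop).limUnder_eq

lemma cesaroMean_comp_succ (a : ℕ → 𝕜) (n : ℕ) :
    cesaroMean (fun k => a (k + 1)) n = cesaroMean a n + (n : 𝕜)⁻¹ * (a n - a 0) := by
  have hsum := (Finset.sum_range_succ a n).symm.trans (Finset.sum_range_succ' a n)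
  simp only [cesaroMean]
  linear_combination -(n : 𝕜)⁻¹ * hsum

lemma banachLim_comp_succ (h : ∀ n, ‖a n‖ ≤ M) :
    banachLim (fun n => a (n + 1)) = banachLim a := by
  have hdiff : Tendsto (fun n : ℕ => (n : 𝕜)⁻¹ * (a n - a 0)) atTop (𝓝 0) := by
    refine squeeze_zero_norm (fun n => ?_) (tendsto_const_div_atTop_nhds_zero_nat (M + M))
    rw [norm_mul, norm_inv, RCLike.norm_natCast, inv_mul_eq_div]
    gcongr
    exact (norm_sub_le _ _).trans (add_le_add (h n) (h 0))
  rw [banachLim, funext (cesaroMean_comp_succ a)]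
  simpa using ((tendsto_cesaroMean_banachLim h).add
    (hdiff.mono_left Nat.hyperfilter_le_atTop)).limUnder_eq

end BanachLimit

section Toeplitz

variable {𝕜 E : Type*} [RCLike 𝕜] [NormedAddCommGroup E] [InnerProductSpace 𝕜 E]
  {S : E →L[𝕜] E}

/-- `⟪(S⋆)ⁿ C Sⁿ ξ, η⟫` -/
def shiftedCoeff (S C : E →L[𝕜] E) (ξ η : E) (n : ℕ) : 𝕜 := ⟪C ((S ^ n) ξ), (S ^ n) η⟫_𝕜

lemma shiftedCoeff_map_map (C : E →L[𝕜] E) (ξ η : E) (n : ℕ) :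
    shiftedCoeff S C (S ξ) (S η) n = shiftedCoeff S C ξ η (n + 1) := by
  simp only [shiftedCoeff, pow_succ, mul_apply_eq_comp]

lemma norm_pow_apply_le (hS : ‖S‖ ≤ 1) (n : ℕ) (x : E) : ‖(S ^ n) x‖ ≤ ‖x‖ := by
  induction n with
  | zero => simp
  | succ n ih =>
    rw [pow_succ', mul_apply_eq_comp]
    exact (S.le_opNorm_of_le ih).trans (mul_le_of_le_one_left (norm_nonneg x) hS)

lemma norm_shiftedCoeff_le (hS : ‖S‖ ≤ 1) (C : E →L[𝕜] E) (ξ η : E) (n : ℕ) :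
    ‖shiftedCoeff S C ξ η n‖ ≤ ‖C‖ * ‖ξ‖ * ‖η‖ :=
  calc ‖shiftedCoeff S C ξ η n‖ ≤ ‖C ((S ^ n) ξ)‖ * ‖(S ^ n) η‖ := norm_inner_le_norm _ _
    _ ≤ ‖C‖ * ‖ξ‖ * ‖η‖ := by
      gcongr
      exacts [C.le_opNorm_of_le (norm_pow_apply_le hS n ξ), norm_pow_apply_le hS n η]

def toeplitzForm (hS : ‖S‖ ≤ 1) (C : E →L[𝕜] E) : E →L⋆[𝕜] E →L[𝕜] 𝕜 :=
  LinearMap.mkContinuous₂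
    (LinearMap.mk₂'ₛₗ (starRingEnd 𝕜) (RingHom.id 𝕜)
      (fun ξ η => banachLim (shiftedCoeff S C ξ η))
      (fun ξ₁ ξ₂ η => by
        rw [← banachLim_add (norm_shiftedCoeff_le hS C ξ₁ η) (norm_shiftedCoeff_le hS C ξ₂ η)]
        congr 1; funext n; simp [shiftedCoeff, inner_add_left])
      (fun c ξ η => by
        rw [smul_eq_mul, ← banachLim_const_mul _ (norm_shiftedCoeff_le hS C ξ η)]
        congr 1; funext n; simp [shiftedCoeff, inner_smul_left])
      (fun ξ η₁ η₂ => by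
        rw [← banachLim_add (norm_shiftedCoeff_le hS C ξ η₁) (norm_shiftedCoeff_le hS C ξ η₂)]
        congr 1; funext n; simp [shiftedCoeff, inner_add_right])
      (fun c ξ η => by
        rw [smul_eq_mul, ← banachLim_const_mul _ (norm_shiftedCoeff_le hS C ξ η)]
        congr 1; funext n; simp [shiftedCoeff, inner_smul_right]))
    ‖C‖ fun ξ η => norm_banachLim_le (norm_shiftedCoeff_le hS C ξ η)

lemma toeplitzForm_apply (hS : ‖S‖ ≤ 1) (C : E →L[𝕜] E) (ξ η : E) :
    toeplitzForm hS C ξ η = banachLim (shiftedCoeff S C ξ η) := rfl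

lemma norm_toeplitzForm_le (hS : ‖S‖ ≤ 1) (C : E →L[𝕜] E) : ‖toeplitzForm hS C‖ ≤ ‖C‖ :=
  LinearMap.mkContinuous₂_norm_le _ (norm_nonneg C) _

variable [CompleteSpace E]

lemma norm_continuousLinearMapOfBilin_le (B : E →L⋆[𝕜] E →L[𝕜] 𝕜) :
    ‖continuousLinearMapOfBilin B‖ ≤ ‖B‖ :=
  opNorm_le_bound _ (norm_nonneg B) fun ξ =>
    ((toDual 𝕜 E).symm.norm_map (B ξ)).trans_le (B.le_opNorm ξ)

def IsToeplitz (S C : E →L[𝕜] E) : Prop := adjoint S ∘L (C ∘L S) = C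

lemma isToeplitz_iff_inner {C : E →L[𝕜] E} :
    IsToeplitz S C ↔ ∀ x y, ⟪C (S x), S y⟫_𝕜 = ⟪C x, y⟫_𝕜 := by
  refine ⟨fun h x y => ?_, fun h => ext fun x => ext_inner_right 𝕜 fun y => ?_⟩
  · conv_rhs => rw [← h]
    exact (adjoint_inner_left _ _ _).symm
  · rw [comp_apply, comp_apply, adjoint_inner_left]
    exact h x y

lemma shiftedCoeff_of_isToeplitz {C : E →L[𝕜] E} (hC : IsToeplitz S C) (ξ η : E) (n : ℕ) :
    shiftedCoeff S C ξ η n = ⟪C ξ, η⟫_𝕜 := by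
  induction n with
  | zero => simp [shiftedCoeff]
  | succ n ih =>
    rw [← ih, shiftedCoeff, pow_succ', mul_apply_eq_comp, mul_apply_eq_comp,
      isToeplitz_iff_inner.mp hC]
    rfl

variable (hS : ‖S‖ ≤ 1)
include hS

def toeplitzProj : (E →L[𝕜] E) →L[𝕜] E →L[𝕜] E :=
  LinearMap.mkContinuous
    { toFun := fun C => continuousLinearMapOfBilin (toeplitzForm hS C)
      map_add' := fun C D => ext fun ξ => ext_inner_right 𝕜 fun η => by
        simp only [add_apply, inner_add_left, continuousLinearMapOfBilin_apply,
          toeplitzForm_apply]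
        rw [← banachLim_add (norm_shiftedCoeff_le hS C ξ η) (norm_shiftedCoeff_le hS D ξ η)]
        congr 1; funext n; simp [shiftedCoeff, inner_add_left]
      map_smul' := fun c C => ext fun ξ => ext_inner_right 𝕜 fun η => by
        simp only [RingHom.id_apply, smul_apply, inner_smul_left, continuousLinearMapOfBilin_apply,
          toeplitzForm_apply]
        rw [← banachLim_const_mul _ (norm_shiftedCoeff_le hS C ξ η)]
        congr 1; funext n; simp [shiftedCoeff, inner_smul_left] }
    1 fun C => by
      rw [one_mul]
      exact (norm_continuousLinearMapOfBilin_le _).trans (norm_toeplitzForm_le hS C)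

lemma inner_toeplitzProj_apply (C : E →L[𝕜] E) (ξ η : E) :
    ⟪toeplitzProj hS C ξ, η⟫_𝕜 = banachLim (shiftedCoeff S C ξ η) :=
  continuousLinearMapOfBilin_apply _ ξ η

lemma norm_toeplitzProj_le : ‖toeplitzProj hS‖ ≤ 1 :=
  LinearMap.mkContinuous_norm_le _ zero_le_one _

lemma isToeplitz_toeplitzProj_apply (C : E →L[𝕜] E) : IsToeplitz S (toeplitzProj hS C) :=
  isToeplitz_iff_inner.mpr fun ξ η => by
    rw [inner_toeplitzProj_apply, inner_toeplitzProj_apply, funext (shiftedCoeff_map_map C ξ η),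
      banachLim_comp_succ (norm_shiftedCoeff_le hS C ξ η)]

lemma toeplitzProj_apply_of_isToeplitz {C : E →L[𝕜] E} (hC : IsToeplitz S C) :
    toeplitzProj hS C = C :=
  ext fun ξ => ext_inner_right 𝕜 fun η => by
    rw [inner_toeplitzProj_apply, funext (shiftedCoeff_of_isToeplitz hC ξ η), banachLim_const]

lemma toeplitzProj_comp_self : (toeplitzProj hS).comp (toeplitzProj hS) = toeplitzProj hS :=
  ext fun C => toeplitzProj_apply_of_isToeplitz hS (isToeplitz_toeplitzProj_apply hS C)

lemma range_toeplitzProj : Set.range (toeplitzProj hS) = {C | IsToeplitz S C} :=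
  Set.ext fun C => ⟨by rintro ⟨D, rfl⟩; exact isToeplitz_toeplitzProj_apply hS D,
    fun hC => ⟨C, toeplitzProj_apply_of_isToeplitz hS hC⟩⟩

lemma norm_toeplitzProj [Nontrivial E] (hone : IsToeplitz S 1) : ‖toeplitzProj hS‖ = 1 := by
  refine (norm_toeplitzProj_le hS).antisymm ?_
  simpa [toeplitzProj_apply_of_isToeplitz hS hone] using (toeplitzProj hS).le_opNorm 1

end Toeplitz

end

lemma lp_inner_map_map_of_shift {𝕜 F : Type*} [RCLike 𝕜] [NormedAddCommGroup F]
    [InnerProductSpace 𝕜 F] {S : lp (fun _ : ℕ => F) 2 → lp (fun _ : ℕ => F) 2}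
    (hS0 : ∀ a, S a 0 = 0) (hS : ∀ a n, S a (n + 1) = a n) (a b : lp (fun _ : ℕ => F) 2) :
    ⟪S a, S b⟫_𝕜 = ⟪a, b⟫_𝕜 := by
  rw [lp.inner_eq_tsum, lp.inner_eq_tsum,
    (lp.summable_inner (𝕜 := 𝕜) (S a) (S b)).tsum_eq_zero_add]
  simp only [hS0, hS, inner_zero_left, zero_add]

open ContinuousLinearMap in
/-- There is a norm-one idempotent on `B(H²)` whose range is exactly the set of
Toeplitz operators `{C : S* C S = C}`, where `S` is the unilateral shift on
`H² = ℓ²(ℕ)`. -/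
theorem stmt_10
    (S : lp (fun _ : ℕ => ℂ) 2 →L[ℂ] lp (fun _ : ℕ => ℂ) 2)
    (hS0 : ∀ a : lp (fun _ : ℕ => ℂ) 2, (S a) 0 = 0)
    (hS : ∀ (a : lp (fun _ : ℕ => ℂ) 2) (n : ℕ), (S a) (n + 1) = a n) :
    ∃ P : (lp (fun _ : ℕ => ℂ) 2 →L[ℂ] lp (fun _ : ℕ => ℂ) 2) →L[ℂ]
          (lp (fun _ : ℕ => ℂ) 2 →L[ℂ] lp (fun _ : ℕ => ℂ) 2),
      ‖P‖ = 1 ∧ P.comp P = P ∧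
      Set.range ⇑P =
        {C : lp (fun _ : ℕ => ℂ) 2 →L[ℂ] lp (fun _ : ℕ => ℂ) 2 |
          (adjoint S).comp (C.comp S) = C} := by
  have hinner := lp_inner_map_map_of_shift (𝕜 := ℂ) hS0 hS
  have hnorm : ‖S‖ ≤ 1 := opNorm_le_bound S zero_le_one fun a => by
    rw [one_mul, (LinearMap.norm_map_iff_inner_map_map S).mpr hinner]
  have hone : IsToeplitz S 1 := isToeplitz_iff_inner.mpr (by simpa using hinner)
  have : Nontrivial (lp (fun _ : ℕ => ℂ) 2) :=
    nontrivial_of_ne (lp.single 2 0 (1 : ℂ)) 0 <| norm_ne_zero_iff.mp <| by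
      rw [lp.norm_single (by norm_num), norm_one]; exact one_ne_zero
  exact ⟨toeplitzProj hnorm, norm_toeplitzProj hnorm hone, toeplitzProj_comp_self hnorm,
    range_toeplitzProj hnorm⟩
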